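/- Suppose Assumption 1 (realizability) holds, and define μ₊ = (μ/2)(ω−1/ω, 2)ᵀ, μ₊₋ = (μ/2)(ω−1/ω, −2)ᵀ, μ₋ = (μ/2)(−(ω+1/ω), 0)ᵀ. For the data distribution D, the class-conditional densities of x ∈ ℝ² are p₊(x) = (1/2)(φ_σ(x−μ₊) + φ_σ(x−μ₊₋)) given y = +1, and p₋(x) = φ_σ(x−μ₋) given y = −1, where φ_σ is the density of N(0, σ²I₂). Then for every x ∈ ℝ², p₊(x) ≥ p₋(x) if and only if x₂ ≥ −ωx₁ − (σ²/μ)·log((1 + exp(−2μx₂/σ²))/2). Since the two labels have equal prior probability 1/2, this inequality characterizes the Bayes-optimal predictor (for γ = 0): it outputs +1 exactly on the set where the inequality holds. -/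

import Mathlib

open MeasureTheory ProbabilityTheory Real Filter Topology
open scoped ENNReal

/-- The standard Gaussian probability density function `φ`. -/
noncomputable def gaussPDF (t : ℝ) : ℝ := (Real.sqrt (2 * Real.pi))⁻¹ * Real.exp (-(t ^ 2) / 2)

/-- The standard Gaussian cumulative distribution function `Φ`. -/
noncomputable def gaussCDF (t : ℝ) : ℝ := ∫ s in Set.Iic t, gaussPDF s

/-- Component of the data distribution corresponding to labels `(y, ε)`: the law of
`(x, y, ε)` where `x₁ ~ N((μ₁−μ₃)/2 + y(μ₁+μ₃)/2, σ²)` and `x₂ ~ N(μ₂ ε (y+1)/2, σ²)`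
independently. -/
noncomputable def Dcomp (μ₁ μ₂ μ₃ σ : ℝ) (y ε : ℝ) : Measure ((ℝ × ℝ) × ℝ × ℝ) :=
  Measure.map (fun q : ℝ × ℝ => (q, y, ε))
    ((gaussianReal ((μ₁ - μ₃) / 2 + y * (μ₁ + μ₃) / 2) (Real.toNNReal (σ ^ 2))).prod
      (gaussianReal (μ₂ * ε * (y + 1) / 2) (Real.toNNReal (σ ^ 2))))

/-- The data distribution `D` over `(x, y, ε)`: `y, ε` independent uniform on `{±1}` and
conditionally `x` as in `Dcomp`. -/
noncomputable def Dfull (μ₁ μ₂ μ₃ σ : ℝ) : Measure ((ℝ × ℝ) × ℝ × ℝ) :=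
  ((1 : ℝ≥0∞) / 4) • (Dcomp μ₁ μ₂ μ₃ σ 1 1 + Dcomp μ₁ μ₂ μ₃ σ 1 (-1)
    + Dcomp μ₁ μ₂ μ₃ σ (-1) 1 + Dcomp μ₁ μ₂ μ₃ σ (-1) (-1))

/-- The data distribution `D` over feature-label pairs `(x, y) ∈ ℝ² × {±1}`. -/
noncomputable def Ddist (μ₁ μ₂ μ₃ σ : ℝ) : Measure ((ℝ × ℝ) × ℝ) :=
  (Dfull μ₁ μ₂ μ₃ σ).map (fun q => (q.1, q.2.1))

/-- Counter-clockwise rotation of a vector in `ℝ²` by `γ` radians: the matrix `U(γ)`. -/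
noncomputable def rot2 (γ : ℝ) (x : ℝ × ℝ) : ℝ × ℝ :=
  (Real.cos γ * x.1 - Real.sin γ * x.2, Real.sin γ * x.1 + Real.cos γ * x.2)

/-- The rotated data distribution `D^(γ)`: the law of `(U(γ)x, y)` for `(x,y) ~ D`. -/
noncomputable def Drot (μ₁ μ₂ μ₃ σ γ : ℝ) : Measure ((ℝ × ℝ) × ℝ) :=
  (Ddist μ₁ μ₂ μ₃ σ).map (fun q => (rot2 γ q.1, q.2))

/-- The two-layer ReLU network `f(W; x) = aᵀ ReLU(W x)` with fixed outer weights `a`. -/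
noncomputable def net2 {mm : ℕ} (a : Fin mm → ℝ) (W : Fin mm → Fin 2 → ℝ) (x : ℝ × ℝ) : ℝ :=
  ∑ k, a k * max 0 (W k 0 * x.1 + W k 1 * x.2)

/-- The expected linear correlation loss `L^(γ)(W) = E_{(x,y)~D^(γ)}[−y · f(W;x)]`. -/
noncomputable def corrLoss {mm : ℕ} (μ₁ μ₂ μ₃ σ γ : ℝ) (a : Fin mm → ℝ)
    (W : Fin mm → Fin 2 → ℝ) : ℝ :=
  ∫ q, -q.2 * net2 a W q.1 ∂(Drot μ₁ μ₂ μ₃ σ γ)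

/-- `μ₊ = (μ/2)·(ω − 1/ω, 2)ᵀ`. -/
noncomputable def muPlus (μ ω : ℝ) : ℝ × ℝ := (μ / 2 * (ω - 1 / ω), μ)

/-- `μ₊₋ = (μ/2)·(ω − 1/ω, −2)ᵀ`. -/
noncomputable def muMix (μ ω : ℝ) : ℝ × ℝ := (μ / 2 * (ω - 1 / ω), -μ)

/-- `μ₋ = (μ/2)·(−(ω + 1/ω), 0)ᵀ`. -/
noncomputable def muMinus (μ ω : ℝ) : ℝ × ℝ := (-(μ / 2 * (ω + 1 / ω)), 0)

/-- Density of the isotropic Gaussian `N(0, σ²I₂)` on `ℝ²`: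
`φ_σ(z) = (2πσ²)⁻¹ exp(−‖z‖²/(2σ²))`. -/
noncomputable def isoGaussPDF (σ : ℝ) (z : ℝ × ℝ) : ℝ :=
  (2 * Real.pi * σ ^ 2)⁻¹ * Real.exp (-(z.1 ^ 2 + z.2 ^ 2) / (2 * σ ^ 2))

/-- Class-conditional density of `x` given `y = +1`. -/
noncomputable def densPlus (μ ω σ : ℝ) (x : ℝ × ℝ) : ℝ :=
  1 / 2 * (isoGaussPDF σ (x - muPlus μ ω) + isoGaussPDF σ (x - muMix μ ω))

/-- Class-conditional density of `x` given `y = −1`. -/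
noncomputable def densMinus (μ ω σ : ℝ) (x : ℝ × ℝ) : ℝ :=
  isoGaussPDF σ (x - muMinus μ ω)

open scoped NNReal

lemma gauss_prod_aux (m₁ m₂ σ : ℝ) (hσ : 0 < σ) :
    (gaussianReal m₁ (Real.toNNReal (σ^2))).prod (gaussianReal m₂ (Real.toNNReal (σ^2)))
      = volume.withDensity (fun x : ℝ × ℝ =>
          ENNReal.ofReal (isoGaussPDF σ (x - (m₁, m₂)))) := by
  have hv : Real.toNNReal (σ^2) ≠ 0 := by
    simp [Real.toNNReal_eq_zero, not_le, pow_pos hσ, hσ.ne']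
  have hvr : ((Real.toNNReal (σ^2) : ℝ≥0) : ℝ) = σ^2 := Real.coe_toNNReal _ (sq_nonneg σ)
  refine Measure.prod_eq fun s t hs ht => ?_
  rw [withDensity_apply _ (hs.prod ht), Measure.volume_eq_prod, ← Measure.prod_restrict]
  have hpt : ∀ x : ℝ × ℝ, ENNReal.ofReal (isoGaussPDF σ (x - (m₁, m₂)))
      = gaussianPDF m₁ (Real.toNNReal (σ^2)) x.1 * gaussianPDF m₂ (Real.toNNReal (σ^2)) x.2 := by
    intro x
    rw [gaussianPDF_def, gaussianPDF_def, ← ENNReal.ofReal_mul (gaussianPDFReal_nonneg _ _ _)]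
    congr 1
    unfold gaussianPDFReal isoGaussPDF
    rw [hvr]
    rw [show ((Real.sqrt (2*Real.pi*σ^2))⁻¹ * Real.exp (-(x.1-m₁)^2/(2*σ^2))) *
        ((Real.sqrt (2*Real.pi*σ^2))⁻¹ * Real.exp (-(x.2-m₂)^2/(2*σ^2)))
        = ((Real.sqrt (2*Real.pi*σ^2)) * (Real.sqrt (2*Real.pi*σ^2)))⁻¹ *
          (Real.exp (-(x.1-m₁)^2/(2*σ^2)) * Real.exp (-(x.2-m₂)^2/(2*σ^2))) from by ring]
    rw [Real.mul_self_sqrt (by positivity), ← Real.exp_add, Prod.fst_sub, Prod.snd_sub]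
    congr 1
    ring
  simp_rw [hpt]
  rw [lintegral_prod_mul ((measurable_gaussianPDF _ _).aemeasurable)
    ((measurable_gaussianPDF _ _).aemeasurable),
    gaussianReal_of_var_ne_zero _ hv, gaussianReal_of_var_ne_zero _ hv,
    withDensity_apply _ hs, withDensity_apply _ ht]

lemma bayes_pointwise_aux (μ₂ σ ω : ℝ) (hμ : 0 < μ₂) (hω : 1 < ω) (hσ : 0 < σ) (x₁ x₂ : ℝ) :
    1 / 2 *
        ((2 * π * σ ^ 2)⁻¹ * rexp (-((x₁ - μ₂ / 2 * (ω - 1 / ω)) ^ 2 + (x₂ - μ₂) ^ 2) / (2 * σ ^ 2)) +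
          (2 * π * σ ^ 2)⁻¹ * rexp (-((x₁ - μ₂ / 2 * (ω - 1 / ω)) ^ 2 + (x₂ - -μ₂) ^ 2) / (2 * σ ^ 2))) ≥
      (2 * π * σ ^ 2)⁻¹ * rexp (-((x₁ - -(μ₂ / 2 * (ω + 1 / ω))) ^ 2 + (x₂ - 0) ^ 2) / (2 * σ ^ 2)) ↔
    x₂ ≥ -ω * x₁ - σ ^ 2 / μ₂ * Real.log ((1 + rexp (-2 * μ₂ * x₂ / σ ^ 2)) / 2) := by
  have hs2 : (0:ℝ) < σ ^ 2 := by positivity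
  have hc : (0:ℝ) < (2 * π * σ ^ 2)⁻¹ := by positivity
  set A : ℝ := -((x₁ - μ₂ / 2 * (ω - 1 / ω)) ^ 2 + (x₂ - μ₂) ^ 2) / (2 * σ ^ 2) with hAdef
  set C : ℝ := -((x₁ - -(μ₂ / 2 * (ω + 1 / ω))) ^ 2 + (x₂ - 0) ^ 2) / (2 * σ ^ 2) with hCdef
  set E : ℝ := rexp (-2 * μ₂ * x₂ / σ ^ 2) with hEdef
  have hE : 0 < E := Real.exp_pos _
  have hL : (0:ℝ) < (1 + E) / 2 := by linarith
  have hB : -((x₁ - μ₂ / 2 * (ω - 1 / ω)) ^ 2 + (x₂ - -μ₂) ^ 2) / (2 * σ ^ 2)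
      = A + -2 * μ₂ * x₂ / σ ^ 2 := by
    rw [hAdef]; field_simp; ring
  rw [hB, Real.exp_add, ← hEdef]
  rw [show 1 / 2 * ((2 * π * σ ^ 2)⁻¹ * rexp A + (2 * π * σ ^ 2)⁻¹ * (rexp A * E))
      = (2 * π * σ ^ 2)⁻¹ * (rexp A * ((1 + E) / 2)) from by ring]
  rw [ge_iff_le, mul_le_mul_iff_right₀ hc, ← Real.exp_log hL, ← Real.exp_add, Real.exp_le_exp]
  rw [← sub_nonneg, show A + Real.log ((1 + E) / 2) - C
      = (μ₂ * (ω * x₁ + x₂) + σ ^ 2 * Real.log ((1 + E) / 2)) / σ ^ 2 from by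
        rw [hAdef, hCdef]; field_simp; ring]
  rw [le_div_iff₀ hs2, zero_mul, Real.log_exp]
  conv_rhs => rw [ge_iff_le, ← sub_nonneg]
  rw [show x₂ - (-ω * x₁ - σ ^ 2 / μ₂ * Real.log ((1 + E) / 2))
      = (μ₂ * (ω * x₁ + x₂) + σ ^ 2 * Real.log ((1 + E) / 2)) / μ₂ from by
        field_simp; ring,
    le_div_iff₀ hμ, zero_mul]

/-- **Bayes-optimal predictor for `γ = 0`.**
Under Assumption 1, the class-conditional laws of `x` under `D` are given by the mixture
densities `p₊` (for `y = +1`) and `p₋` (for `y = −1`), and for every `x ∈ ℝ²`,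
`p₊(x) ≥ p₋(x)` iff `x₂ ≥ −ωx₁ − (σ²/μ)·log((1 + exp(−2μx₂/σ²))/2)`.  Since the two labels
have equal prior probability `1/2`, this inequality characterizes where the Bayes-optimal
predictor outputs `+1`. -/
theorem stmt_19 (μ₁ μ₂ μ₃ σ ω : ℝ)
    (hμ : 0 < μ₂) (hω : 1 < ω) (hσ : 0 < σ)
    (hA11 : μ₁ = μ₂ / 2 * (ω - 1 / ω)) (hA13 : μ₃ = μ₂ / 2 * (ω + 1 / ω)) :
    -- the conditional law of `x` given `y = +1` has density `p₊`:
    (Measure.map Prod.fst ((Ddist μ₁ μ₂ μ₃ σ)[|{q | q.2 = 1}])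
        = MeasureTheory.volume.withDensity (fun x => ENNReal.ofReal (densPlus μ₂ ω σ x)))
    -- the conditional law of `x` given `y = −1` has density `p₋`:
    ∧ (Measure.map Prod.fst ((Ddist μ₁ μ₂ μ₃ σ)[|{q | q.2 = -1}])
        = MeasureTheory.volume.withDensity (fun x => ENNReal.ofReal (densMinus μ₂ ω σ x)))
    -- the labels have equal prior probability `1/2`:
    ∧ (Ddist μ₁ μ₂ μ₃ σ) {q | q.2 = 1} = 1 / 2
    ∧ (Ddist μ₁ μ₂ μ₃ σ) {q | q.2 = -1} = 1 / 2
    -- characterization of the Bayes-optimal `+1` region: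
    ∧ ∀ x : ℝ × ℝ,
        densPlus μ₂ ω σ x ≥ densMinus μ₂ ω σ x ↔
          x.2 ≥ -ω * x.1
            - σ ^ 2 / μ₂ * Real.log ((1 + Real.exp (-2 * μ₂ * x.2 / σ ^ 2)) / 2) := by
  set v := Real.toNNReal (σ ^ 2) with hv
  set P : ℝ → ℝ → Measure (ℝ × ℝ) := fun y ε =>
    (gaussianReal ((μ₁ - μ₃) / 2 + y * (μ₁ + μ₃) / 2) v).prod
      (gaussianReal (μ₂ * ε * (y + 1) / 2) v) with hP
  have hmeas : ∀ y : ℝ, Measurable (fun q : ℝ × ℝ => (q, y)) :=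
    fun y => measurable_id.prodMk measurable_const
  have hDd : Ddist μ₁ μ₂ μ₃ σ
      = ((1 : ℝ≥0∞) / 4) • (Measure.map (fun q : ℝ × ℝ => (q, (1:ℝ))) (P 1 1)
        + Measure.map (fun q : ℝ × ℝ => (q, (1:ℝ))) (P 1 (-1))
        + Measure.map (fun q : ℝ × ℝ => (q, (-1:ℝ))) (P (-1) 1)
        + Measure.map (fun q : ℝ × ℝ => (q, (-1:ℝ))) (P (-1) (-1))) := by
    have hcomp : ∀ y ε : ℝ, Measure.map (fun q : (ℝ×ℝ)×ℝ×ℝ => (q.1, q.2.1))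
        (Dcomp μ₁ μ₂ μ₃ σ y ε) = Measure.map (fun q : ℝ × ℝ => (q, y)) (P y ε) := by
      intro y ε
      rw [Dcomp, Measure.map_map (by fun_prop) (by fun_prop)]
      rfl
    rw [Ddist, Dfull, Measure.map_smul, Measure.map_add _ _ (by fun_prop),
      Measure.map_add _ _ (by fun_prop), Measure.map_add _ _ (by fun_prop),
      hcomp, hcomp, hcomp, hcomp]
  have hS1 : MeasurableSet {q : (ℝ×ℝ)×ℝ | q.2 = 1} :=
    measurable_snd (measurableSet_singleton 1)
  have hSm : MeasurableSet {q : (ℝ×ℝ)×ℝ | q.2 = -1} :=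
    measurable_snd (measurableSet_singleton (-1))
  have hpre1 : ∀ y : ℝ, (fun q : ℝ × ℝ => (q, y)) ⁻¹' {q : (ℝ×ℝ)×ℝ | q.2 = 1}
      = {q : ℝ × ℝ | y = 1} := by intro y; rfl
  have hprem : ∀ y : ℝ, (fun q : ℝ × ℝ => (q, y)) ⁻¹' {q : (ℝ×ℝ)×ℝ | q.2 = -1}
      = {q : ℝ × ℝ | y = -1} := by intro y; rfl
  have huniv1 : {q : ℝ × ℝ | (1:ℝ) = 1} = Set.univ := by ext q; simp
  have hempty1 : {q : ℝ × ℝ | (-1:ℝ) = 1} = (∅ : Set (ℝ × ℝ)) := by ext q; norm_num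
  have hunivm : {q : ℝ × ℝ | (-1:ℝ) = -1} = Set.univ := by ext q; simp
  have hemptym : {q : ℝ × ℝ | (1:ℝ) = -1} = (∅ : Set (ℝ × ℝ)) := by ext q; norm_num
  -- density functions
  have hmf : ∀ m : ℝ × ℝ, Measurable fun x : ℝ × ℝ =>
      ENNReal.ofReal (isoGaussPDF σ (x - m)) := by
    intro m
    apply ENNReal.measurable_ofReal.comp
    unfold isoGaussPDF
    fun_prop
  have hnn : ∀ (m : ℝ × ℝ) (x : ℝ × ℝ), 0 ≤ isoGaussPDF σ (x - m) := by
    intro m x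
    unfold isoGaussPDF
    positivity
  -- identify the four product measures
  have h11 : P 1 1 = volume.withDensity
      (fun x : ℝ × ℝ => ENNReal.ofReal (isoGaussPDF σ (x - muPlus μ₂ ω))) := by
    rw [hP]
    simp only
    rw [show (μ₁ - μ₃) / 2 + 1 * (μ₁ + μ₃) / 2 = μ₂ / 2 * (ω - 1 / ω) from by
        rw [hA11, hA13]; ring,
      show μ₂ * 1 * ((1:ℝ) + 1) / 2 = μ₂ from by ring, hv, gauss_prod_aux _ _ _ hσ]
    rfl
  have h1m : P 1 (-1) = volume.withDensity
      (fun x : ℝ × ℝ => ENNReal.ofReal (isoGaussPDF σ (x - muMix μ₂ ω))) := by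
    rw [hP]
    simp only
    rw [show (μ₁ - μ₃) / 2 + 1 * (μ₁ + μ₃) / 2 = μ₂ / 2 * (ω - 1 / ω) from by
        rw [hA11, hA13]; ring,
      show μ₂ * (-1) * ((1:ℝ) + 1) / 2 = -μ₂ from by ring, hv, gauss_prod_aux _ _ _ hσ]
    rfl
  have hm : ∀ ε : ℝ, P (-1) ε = volume.withDensity
      (fun x : ℝ × ℝ => ENNReal.ofReal (isoGaussPDF σ (x - muMinus μ₂ ω))) := by
    intro ε
    rw [hP]
    simp only
    rw [show (μ₁ - μ₃) / 2 + (-1) * (μ₁ + μ₃) / 2 = -(μ₂ / 2 * (ω + 1 / ω)) from by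
        rw [hA11, hA13]; ring,
      show μ₂ * ε * ((-1:ℝ) + 1) / 2 = 0 from by ring, hv, gauss_prod_aux _ _ _ hσ]
    rfl
  have hprob : ∀ y ε : ℝ, IsProbabilityMeasure (P y ε) := by
    intro y ε
    rw [hP]
    infer_instance
  -- measures of the label sets
  have hDd1 : (Ddist μ₁ μ₂ μ₃ σ) {q : (ℝ×ℝ)×ℝ | q.2 = 1} = 1 / 2 := by
    rw [hDd]
    rw [Measure.smul_apply, Measure.add_apply, Measure.add_apply, Measure.add_apply,
      Measure.map_apply (hmeas 1) hS1, Measure.map_apply (hmeas 1) hS1,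
      Measure.map_apply (hmeas (-1)) hS1, Measure.map_apply (hmeas (-1)) hS1,
      hpre1, hpre1, huniv1, hempty1]
    have := hprob 1 1
    have := hprob 1 (-1)
    simp only [measure_univ, measure_empty, smul_eq_mul]
    norm_num
    rw [show (4:ℝ≥0∞) = 2*2 from by norm_num, ENNReal.mul_inv (by norm_num) (by norm_num),
      mul_assoc, ENNReal.inv_mul_cancel (by norm_num) (by norm_num), mul_one]
  have hDdm : (Ddist μ₁ μ₂ μ₃ σ) {q : (ℝ×ℝ)×ℝ | q.2 = -1} = 1 / 2 := by
    rw [hDd]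
    rw [Measure.smul_apply, Measure.add_apply, Measure.add_apply, Measure.add_apply,
      Measure.map_apply (hmeas 1) hSm, Measure.map_apply (hmeas 1) hSm,
      Measure.map_apply (hmeas (-1)) hSm, Measure.map_apply (hmeas (-1)) hSm,
      hprem, hprem, hunivm, hemptym]
    have := hprob (-1) 1
    have := hprob (-1) (-1)
    simp only [measure_univ, measure_empty, smul_eq_mul]
    norm_num
    rw [show (4:ℝ≥0∞) = 2*2 from by norm_num, ENNReal.mul_inv (by norm_num) (by norm_num),
      mul_assoc, ENNReal.inv_mul_cancel (by norm_num) (by norm_num), mul_one]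
  -- conditional measure mapped to features, `y = 1`
  have hcond1 : Measure.map Prod.fst ((Ddist μ₁ μ₂ μ₃ σ)[|{q : (ℝ×ℝ)×ℝ | q.2 = 1}])
      = MeasureTheory.volume.withDensity (fun x => ENNReal.ofReal (densPlus μ₂ ω σ x)) := by
    rw [ProbabilityTheory.cond, hDd1, Measure.map_smul, hDd,
      Measure.restrict_smul, Measure.restrict_add, Measure.restrict_add, Measure.restrict_add,
      Measure.restrict_map (hmeas 1) hS1, Measure.restrict_map (hmeas 1) hS1,
      Measure.restrict_map (hmeas (-1)) hS1, Measure.restrict_map (hmeas (-1)) hS1,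
      hpre1, hpre1, huniv1, hempty1]
    simp only [Measure.restrict_univ, Measure.restrict_empty, Measure.map_zero, add_zero, zero_add]
    rw [Measure.map_smul, Measure.map_add _ _ measurable_fst,
      Measure.map_map measurable_fst (hmeas 1), Measure.map_map measurable_fst (hmeas 1)]
    have hid : (Prod.fst ∘ fun q : ℝ × ℝ => (q, (1:ℝ))) = id := rfl
    rw [hid, Measure.map_id, Measure.map_id, h11, h1m, smul_smul,
      show ((1:ℝ≥0∞)/2)⁻¹ * (1/4) = 1/2 from by
        rw [one_div, one_div, inv_inv,
          show (4:ℝ≥0∞) = 2*2 from by norm_num, ENNReal.mul_inv (by norm_num) (by norm_num),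
          ← mul_assoc, ENNReal.mul_inv_cancel (by norm_num) (by norm_num), one_mul]]
    have hfun : (fun x => ENNReal.ofReal (densPlus μ₂ ω σ x))
        = ((1:ℝ≥0∞)/2) • ((fun x : ℝ × ℝ => ENNReal.ofReal (isoGaussPDF σ (x - muPlus μ₂ ω)))
            + fun x : ℝ × ℝ => ENNReal.ofReal (isoGaussPDF σ (x - muMix μ₂ ω))) := by
      funext x
      simp only [Pi.smul_apply, Pi.add_apply, smul_eq_mul, densPlus]
      rw [← ENNReal.ofReal_add (hnn _ x) (hnn _ x),
        show ((1:ℝ≥0∞)/2) = ENNReal.ofReal (1/2) from by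
          rw [ENNReal.ofReal_div_of_pos] <;> norm_num,
        ← ENNReal.ofReal_mul (by norm_num : (0:ℝ) ≤ 1/2)]
    rw [hfun, withDensity_smul' _ _ (by norm_num), withDensity_add_left (hmf _)]
  -- conditional measure mapped to features, `y = -1`
  have hcondm : Measure.map Prod.fst ((Ddist μ₁ μ₂ μ₃ σ)[|{q : (ℝ×ℝ)×ℝ | q.2 = -1}])
      = MeasureTheory.volume.withDensity (fun x => ENNReal.ofReal (densMinus μ₂ ω σ x)) := by
    rw [ProbabilityTheory.cond, hDdm, Measure.map_smul, hDd,
      Measure.restrict_smul, Measure.restrict_add, Measure.restrict_add, Measure.restrict_add,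
      Measure.restrict_map (hmeas 1) hSm, Measure.restrict_map (hmeas 1) hSm,
      Measure.restrict_map (hmeas (-1)) hSm, Measure.restrict_map (hmeas (-1)) hSm,
      hprem, hprem, hunivm, hemptym]
    simp only [Measure.restrict_univ, Measure.restrict_empty, Measure.map_zero, add_zero, zero_add]
    rw [Measure.map_smul, Measure.map_add _ _ measurable_fst,
      Measure.map_map measurable_fst (hmeas (-1)), Measure.map_map measurable_fst (hmeas (-1))]
    have hid : (Prod.fst ∘ fun q : ℝ × ℝ => (q, (-1:ℝ))) = id := rfl
    rw [hid, Measure.map_id, Measure.map_id, hm, hm, smul_smul,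
      show ((1:ℝ≥0∞)/2)⁻¹ * (1/4) = 1/2 from by
        rw [one_div, one_div, inv_inv,
          show (4:ℝ≥0∞) = 2*2 from by norm_num, ENNReal.mul_inv (by norm_num) (by norm_num),
          ← mul_assoc, ENNReal.mul_inv_cancel (by norm_num) (by norm_num), one_mul]]
    have hfun : (fun x => ENNReal.ofReal (densMinus μ₂ ω σ x))
        = ((1:ℝ≥0∞)/2) • ((fun x : ℝ × ℝ => ENNReal.ofReal (isoGaussPDF σ (x - muMinus μ₂ ω)))
            + fun x : ℝ × ℝ => ENNReal.ofReal (isoGaussPDF σ (x - muMinus μ₂ ω))) := by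
      funext x
      simp only [Pi.smul_apply, Pi.add_apply, smul_eq_mul, densMinus]
      rw [← ENNReal.ofReal_add (hnn _ x) (hnn _ x),
        show (isoGaussPDF σ (x - muMinus μ₂ ω) + isoGaussPDF σ (x - muMinus μ₂ ω))
          = 2 * isoGaussPDF σ (x - muMinus μ₂ ω) from by ring,
        ENNReal.ofReal_mul (by norm_num : (0:ℝ) ≤ 2), ← mul_assoc,
        show ((1:ℝ≥0∞)/2) * ENNReal.ofReal 2 = 1 from by
          rw [show ENNReal.ofReal 2 = 2 from by norm_num, one_div, ENNReal.inv_mul_cancel] <;> norm_num,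
        one_mul]
    rw [hfun, withDensity_smul' _ _ (by norm_num), withDensity_add_left (hmf _)]
  refine ⟨hcond1, hcondm, hDd1, hDdm, ?_⟩
  intro x
  obtain ⟨x₁, x₂⟩ := x
  simp only [densPlus, densMinus, isoGaussPDF, muPlus, muMix, muMinus,
    Prod.fst_sub, Prod.snd_sub]
  exact bayes_pointwise_aux μ₂ σ ω hμ hω hσ x₁ x₂
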